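/- Let X be a completely regular Hausdorff (Tychonoff) space. Then the partially ordered set (ℋ(X), ⊆) of all non-vanishing closed ideals of C_B(X) is order-isomorphic to the partially ordered set (𝒰(X), ⊆) of all open subsets of βX containing X, via the map H ↦ λ_H X. -/
import Mathlib


open BoundedContinuousFunction Set Filter Topology

section Preamble

variable {X : Type*} [TopologicalSpace X] {𝕜 : Type*} [RCLike 𝕜]

theorem betaExt_aux (f : X →ᵇ 𝕜) :
    Continuous (fun x => (⟨f x, by
      simpa [Metric.mem_closedBall, dist_zero_right] using f.norm_coe_le_norm x⟩ :
        Metric.closedBall (0 : 𝕜) ‖f‖)) :=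
  f.continuous.subtype_mk _

/-- `f_β`, the unique continuous extension of a bounded continuous function `f : X → 𝕜` to the
Stone–Čech compactification `βX`. -/
noncomputable def betaExt (f : X →ᵇ 𝕜) : StoneCech X → 𝕜 :=
  haveI : CompactSpace (Metric.closedBall (0 : 𝕜) ‖f‖) :=
    isCompact_iff_compactSpace.mp (isCompact_closedBall 0 ‖f‖)
  fun p => (stoneCechExtend (betaExt_aux f) p).1

theorem betaExt_unit (f : X →ᵇ 𝕜) (x : X) : betaExt f (stoneCechUnit x) = f x := by
  haveI : CompactSpace (Metric.closedBall (0 : 𝕜) ‖f‖) :=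
    isCompact_iff_compactSpace.mp (isCompact_closedBall 0 ‖f‖)
  exact congrArg Subtype.val (congrFun (stoneCechExtend_extends (betaExt_aux f)) x)

theorem continuous_betaExt (f : X →ᵇ 𝕜) : Continuous (betaExt f) := by
  haveI : CompactSpace (Metric.closedBall (0 : 𝕜) ‖f‖) :=
    isCompact_iff_compactSpace.mp (isCompact_closedBall 0 ‖f‖)
  exact continuous_subtype_val.comp (continuous_stoneCechExtend _)

/-- `λ_G X`, the union over `g ∈ G` of the cozero-sets in `βX` of the extensions `g_β`. -/
def lambdaSet (G : Ideal (X →ᵇ 𝕜)) : Set (StoneCech X) :=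
  ⋃ g ∈ G, {p | betaExt g p ≠ 0}

end Preamble

section Aux

variable {X : Type*} [TopologicalSpace X] {𝕜 : Type*} [RCLike 𝕜]

theorem betaExt_eq (f : X →ᵇ 𝕜) {φ : StoneCech X → 𝕜} (hφ : Continuous φ)
    (h : ∀ x, φ (stoneCechUnit x) = f x) : φ = betaExt f :=
  Continuous.ext_on denseRange_stoneCechUnit hφ (continuous_betaExt f)
    (by rintro _ ⟨x, rfl⟩; rw [betaExt_unit]; exact h x)

theorem betaExt_add (f g : X →ᵇ 𝕜) : betaExt (f + g) = betaExt f + betaExt g :=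
  (betaExt_eq (f + g) ((continuous_betaExt f).add (continuous_betaExt g))
    (fun x => by simp [betaExt_unit])).symm

theorem betaExt_mul (f g : X →ᵇ 𝕜) : betaExt (f * g) = betaExt f * betaExt g :=
  (betaExt_eq (f * g) ((continuous_betaExt f).mul (continuous_betaExt g))
    (fun x => by simp [betaExt_unit])).symm

theorem betaExt_sub (f g : X →ᵇ 𝕜) : betaExt (f - g) = betaExt f - betaExt g :=
  (betaExt_eq (f - g) ((continuous_betaExt f).sub (continuous_betaExt g))
    (fun x => by simp [betaExt_unit])).symm

theorem betaExt_zero : betaExt (0 : X →ᵇ 𝕜) = 0 := by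
  have := betaExt_eq (X := X) (0 : X →ᵇ 𝕜) (φ := fun _ => (0 : 𝕜)) continuous_const
    (fun x => by simp)
  funext p
  rw [← this]
  rfl

theorem norm_betaExt_le (f : X →ᵇ 𝕜) (p : StoneCech X) : ‖betaExt f p‖ ≤ ‖f‖ := by
  have hS : IsClosed {p : StoneCech X | ‖betaExt f p‖ ≤ ‖f‖} :=
    isClosed_le ((continuous_betaExt f).norm) continuous_const
  have hsub : range (stoneCechUnit : X → StoneCech X) ⊆
      {p : StoneCech X | ‖betaExt f p‖ ≤ ‖f‖} := by
    rintro _ ⟨x, rfl⟩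
    simp only [mem_setOf_eq, betaExt_unit]
    exact f.norm_coe_le_norm x
  have := (denseRange_stoneCechUnit (α := X)).closure_eq
  have h2 : closure (range (stoneCechUnit : X → StoneCech X)) ⊆
      {p : StoneCech X | ‖betaExt f p‖ ≤ ‖f‖} := hS.closure_subset_iff.mpr hsub
  exact h2 (this ▸ mem_univ p)

theorem lipschitz_betaExt_apply (p : StoneCech X) :
    LipschitzWith 1 (fun f : X →ᵇ 𝕜 => betaExt f p) := by
  refine LipschitzWith.of_dist_le_mul fun f g => ?_
  simp only [NNReal.coe_one, one_mul, dist_eq_norm]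
  calc ‖betaExt f p - betaExt g p‖ = ‖betaExt (f - g) p‖ := by rw [betaExt_sub]; rfl
    _ ≤ ‖f - g‖ := norm_betaExt_le _ p

/-- The ideal of functions whose extension's cozero set is contained in `U`. -/
def cozIdeal (U : Set (StoneCech X)) : Ideal (X →ᵇ 𝕜) where
  carrier := {f | ∀ p, betaExt f p ≠ 0 → p ∈ U}
  add_mem' := by
    intro a b ha hb p hp
    rw [betaExt_add] at hp
    by_contra hpU
    have h1 : betaExt a p = 0 := by by_contra h; exact hpU (ha p h)
    have h2 : betaExt b p = 0 := by by_contra h; exact hpU (hb p h)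
    exact hp (by simp [Pi.add_apply, h1, h2])
  zero_mem' := by intro p hp; rw [betaExt_zero] at hp; exact absurd rfl hp
  smul_mem' := by
    intro c f hf p hp
    rw [smul_eq_mul, betaExt_mul] at hp
    exact hf p fun h => hp (by simp [Pi.mul_apply, h])

theorem isClosed_cozIdeal (U : Set (StoneCech X)) :
    IsClosed ((cozIdeal U : Ideal (X →ᵇ 𝕜)) : Set (X →ᵇ 𝕜)) := by
  have : ((cozIdeal U : Ideal (X →ᵇ 𝕜)) : Set (X →ᵇ 𝕜)) =
      ⋂ (p : StoneCech X) (_ : p ∉ U), (fun f : X →ᵇ 𝕜 => betaExt f p) ⁻¹' {0} := by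
    ext f
    simp only [mem_iInter, mem_preimage, mem_singleton_iff]
    constructor
    · intro hf p hp
      by_contra h
      exact hp (hf p h)
    · intro hf p hp
      by_contra hpU
      exact hp (hf p hpU)
  rw [this]
  exact isClosed_iInter fun p => isClosed_iInter fun _ =>
    IsClosed.preimage (lipschitz_betaExt_apply p).continuous isClosed_singleton

theorem isOpen_coz (g : X →ᵇ 𝕜) : IsOpen {p : StoneCech X | betaExt g p ≠ 0} :=
  isOpen_ne.preimage (continuous_betaExt g)

theorem isOpen_lambdaSet (H : Ideal (X →ᵇ 𝕜)) : IsOpen (lambdaSet H) :=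
  isOpen_biUnion fun g _ => isOpen_coz g

theorem mem_lambdaSet_of_mem {H : Ideal (X →ᵇ 𝕜)} {g : X →ᵇ 𝕜} (hg : g ∈ H)
    {p : StoneCech X} (hp : betaExt g p ≠ 0) : p ∈ lambdaSet H :=
  mem_biUnion hg hp

end Aux

section Urysohn

variable {X : Type*} [TopologicalSpace X] {𝕜 : Type*} [RCLike 𝕜]

theorem exists_mem_cozIdeal {U : Set (StoneCech X)} (hU : IsOpen U) {p : StoneCech X}
    (hp : p ∈ U) : ∃ g : X →ᵇ 𝕜, g ∈ (cozIdeal U : Ideal (X →ᵇ 𝕜)) ∧ betaExt g p = 1 := by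
  obtain ⟨F, hF0, hF1, hFmem⟩ := exists_continuous_zero_one_of_isClosed
    (isClosed_compl_iff.mpr hU) (isClosed_singleton (x := p))
    (disjoint_singleton_right.mpr fun h => h hp)
  set g : X →ᵇ 𝕜 := BoundedContinuousFunction.ofNormedAddCommGroup
    (fun x => ((F (stoneCechUnit x) : ℝ) : 𝕜))
    (RCLike.continuous_ofReal.comp (F.continuous.comp continuous_stoneCechUnit)) 1
    (fun x => by
      rw [RCLike.norm_ofReal]
      have := hFmem (stoneCechUnit x)
      rw [abs_of_nonneg this.1]
      exact this.2) with hg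
  have hbeta : betaExt g = fun q => ((F q : ℝ) : 𝕜) := by
    refine (betaExt_eq g ?_ fun x => rfl).symm
    exact RCLike.continuous_ofReal.comp F.continuous
  refine ⟨g, ?_, ?_⟩
  · intro q hq
    rw [hbeta] at hq
    by_contra hqU
    refine hq ?_
    show ((F q : ℝ) : 𝕜) = 0
    rw [show F q = 0 from hF0 hqU]
    simp
  · rw [hbeta]
    show ((F p : ℝ) : 𝕜) = 1
    rw [show F p = 1 from hF1 rfl]
    simp

end Urysohn

section Key

set_option maxHeartbeats 2000000

variable {X : Type*} [TopologicalSpace X] {𝕜 : Type*} [RCLike 𝕜]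

theorem mem_of_coz_subset {H : Ideal (X →ᵇ 𝕜)} (hcl : IsClosed (H : Set (X →ᵇ 𝕜)))
    (f : X →ᵇ 𝕜) (hf : ∀ p, betaExt f p ≠ 0 → p ∈ lambdaSet H) : f ∈ H := by
  have hclosure : f ∈ closure (H : Set (X →ᵇ 𝕜)) := by
    rw [Metric.mem_closure_iff]
    intro ε hε
    set K : Set (StoneCech X) := {p | ε / 2 ≤ ‖betaExt f p‖} with hK
    have hKcl : IsClosed K := isClosed_le continuous_const (continuous_betaExt f).norm
    have hKc : IsCompact K := hKcl.isCompact
    by_cases hKne : K.Nonempty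
    · -- cover K by finitely many cozero sets
      have hcov : K ⊆ ⋃ g : {g : X →ᵇ 𝕜 // g ∈ H}, {p | betaExt g.1 p ≠ 0} := by
        intro p hp
        have hne : betaExt f p ≠ 0 := by
          intro h0
          have := hp
          rw [hK, mem_setOf_eq, h0, norm_zero] at this
          linarith
        obtain ⟨g, hgH, hpg⟩ := mem_iUnion₂.mp (hf p hne)
        exact mem_iUnion.mpr ⟨⟨g, hgH⟩, hpg⟩
      obtain ⟨t, ht⟩ := hKc.elim_finite_subcover
        (fun g : {g : X →ᵇ 𝕜 // g ∈ H} => {p | betaExt g.1 p ≠ 0})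
        (fun g => isOpen_coz g.1) hcov
      -- the auxiliary element h = ∑ star g * g
      set h : X →ᵇ 𝕜 := ∑ i ∈ t, star i.1 * i.1 with hh
      have hH : h ∈ H := Ideal.sum_mem _ fun i _ => H.mul_mem_left _ i.2
      set R : StoneCech X → ℝ := fun p => ∑ i ∈ t, ‖betaExt i.1 p‖ ^ 2 with hR
      have hRcont : Continuous R := continuous_finset_sum _ fun i _ =>
        ((continuous_betaExt i.1).norm.pow 2)
      have hR0 : ∀ p, 0 ≤ R p := fun p => Finset.sum_nonneg fun i _ => sq_nonneg _
      have hbeta_h : betaExt h = fun p => ((R p : ℝ) : 𝕜) := by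
        refine (betaExt_eq h (RCLike.continuous_ofReal.comp hRcont) fun x => ?_).symm
        show ((R (stoneCechUnit x) : ℝ) : 𝕜) = h x
        rw [hh, hR]
        push_cast
        simp only [BoundedContinuousFunction.coe_sum, Finset.sum_apply,
          BoundedContinuousFunction.coe_mul, Pi.mul_apply, star_apply, betaExt_unit]
        refine Finset.sum_congr rfl fun i _ => ?_
        rw [RCLike.star_def, RCLike.conj_mul]
      -- minimum of R on K
      obtain ⟨p₀, hp₀K, hp₀min⟩ := hKc.exists_isMinOn hKne hRcont.continuousOn
      set m : ℝ := R p₀ with hm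
      have hmpos : 0 < m := by
        have := ht hp₀K
        simp only [mem_iUnion] at this
        obtain ⟨i, hi, hpi⟩ := this
        refine Finset.sum_pos' (fun j _ => sq_nonneg _) ⟨i, hi, ?_⟩
        have hb : betaExt i.1 p₀ ≠ 0 := hpi
        exact pow_pos (norm_pos_iff.mpr hb) 2
      set c : ℝ := ε / 2 * m / (‖f‖ + 1) with hc
      have hfnorm : (0:ℝ) < ‖f‖ + 1 := by positivity
      have hcpos : 0 < c := by
        rw [hc]
        positivity
      clear_value c
      -- the multiplier q
      have hden : ∀ x : X, R (stoneCechUnit x) + c ≠ 0 := fun x => by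
        have := hR0 (stoneCechUnit x); positivity
      set q : X →ᵇ 𝕜 := BoundedContinuousFunction.ofNormedAddCommGroup
        (fun x => (((R (stoneCechUnit x) + c)⁻¹ : ℝ) : 𝕜))
        (RCLike.continuous_ofReal.comp
          (((hRcont.comp continuous_stoneCechUnit).add continuous_const).inv₀ hden))
        c⁻¹
        (fun x => by
          rw [RCLike.norm_ofReal, abs_of_nonneg (by have := hR0 (stoneCechUnit x); positivity)]
          exact inv_anti₀ hcpos (le_add_of_nonneg_left (hR0 _))) with hq
      have hqx : ∀ x : X, q x = (((R (stoneCechUnit x) + c)⁻¹ : ℝ) : 𝕜) := fun x => rfl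
      have hhx : ∀ x : X, h x = ((R (stoneCechUnit x) : ℝ) : 𝕜) := fun x => by
        rw [← betaExt_unit h x, hbeta_h]
      set k : X →ᵇ 𝕜 := (f * q) * h with hk
      have hkH : k ∈ H := H.mul_mem_left _ hH
      refine ⟨k, hkH, ?_⟩
      rw [dist_eq_norm]
      have hbound : ∀ x : X, ‖(f - k) x‖ ≤ ε / 2 := by
        intro x
        set Rx : ℝ := R (stoneCechUnit x) with hRx
        have hRx0 : 0 ≤ Rx := hR0 _
        have hfk : (f - k) x = f x * ((c * (Rx + c)⁻¹ : ℝ) : 𝕜) := by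
          simp only [BoundedContinuousFunction.coe_sub, Pi.sub_apply, hk,
            BoundedContinuousFunction.coe_mul, Pi.mul_apply, hqx, hhx, ← hRx]
          have hne : ((Rx + c : ℝ) : 𝕜) ≠ 0 := by
            rw [RCLike.ofReal_ne_zero]
            have := hden x; rw [← hRx] at this; exact this
          push_cast at hne ⊢
          field_simp
          ring
        rw [hfk, norm_mul, RCLike.norm_ofReal,
          abs_of_nonneg (by positivity)]
        by_cases hcase : ‖f x‖ ≤ ε / 2
        · have h1 : c * (Rx + c)⁻¹ ≤ 1 := by
            rw [mul_inv_le_iff₀ (by positivity), one_mul]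
            linarith
          calc ‖f x‖ * (c * (Rx + c)⁻¹) ≤ (ε / 2) * 1 := by
                apply mul_le_mul hcase h1 (by positivity) (by positivity)
            _ = ε / 2 := mul_one _
        · push_neg at hcase
          have hxK : stoneCechUnit x ∈ K := by
            rw [hK, mem_setOf_eq, betaExt_unit]
            exact le_of_lt hcase
          have hmRx : m ≤ Rx := hp₀min hxK
          have h2 : c * (Rx + c)⁻¹ ≤ c / m := by
            rw [div_eq_mul_inv]
            refine mul_le_mul_of_nonneg_left ?_ (le_of_lt hcpos)
            exact inv_anti₀ hmpos (by linarith)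
          have h3 : c / m = ε / 2 / (‖f‖ + 1) := by
            rw [hc]
            field_simp
          calc ‖f x‖ * (c * (Rx + c)⁻¹) ≤ ‖f‖ * (c / m) :=
                mul_le_mul (f.norm_coe_le_norm x) h2 (by positivity) (norm_nonneg _)
            _ = ‖f‖ * (ε / 2 / (‖f‖ + 1)) := by rw [h3]
            _ ≤ (‖f‖ + 1) * (ε / 2 / (‖f‖ + 1)) := by
                apply mul_le_mul_of_nonneg_right (by linarith) (by positivity)
            _ = ε / 2 := by field_simp
      have : ‖f - k‖ ≤ ε / 2 := (f - k).norm_le (by positivity) |>.mpr hbound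
      linarith
    · -- K empty: f itself is small
      refine ⟨0, H.zero_mem, ?_⟩
      rw [dist_zero_right]
      have hb : ∀ x : X, ‖f x‖ ≤ ε / 2 := by
        intro x
        by_contra hx
        push_neg at hx
        exact hKne ⟨stoneCechUnit x, by rw [hK, mem_setOf_eq, betaExt_unit]; linarith⟩
      have : ‖f‖ ≤ ε / 2 := f.norm_le (by positivity) |>.mpr hb
      linarith
  rwa [hcl.closure_eq] at hclosure

end Key

section MainAux

variable {X : Type*} [TopologicalSpace X] {𝕜 : Type*} [RCLike 𝕜]

theorem mem_cozIdeal {U : Set (StoneCech X)} {f : X →ᵇ 𝕜} :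
    f ∈ (cozIdeal U : Ideal (X →ᵇ 𝕜)) ↔ ∀ p, betaExt f p ≠ 0 → p ∈ U := Iff.rfl

theorem cozIdeal_lambdaSet {H : Ideal (X →ᵇ 𝕜)} (hcl : IsClosed (H : Set (X →ᵇ 𝕜))) :
    cozIdeal (lambdaSet H) = H := by
  apply le_antisymm
  · intro f hf
    exact mem_of_coz_subset hcl f (mem_cozIdeal.mp hf)
  · intro g hg
    exact mem_cozIdeal.mpr fun p hp => mem_lambdaSet_of_mem hg hp

theorem lambdaSet_cozIdeal {U : Set (StoneCech X)} (hU : IsOpen U) :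
    lambdaSet (cozIdeal U : Ideal (X →ᵇ 𝕜)) = U := by
  apply subset_antisymm
  · intro p hp
    obtain ⟨g, hg, hpg⟩ := mem_iUnion₂.mp hp
    exact mem_cozIdeal.mp hg p hpg
  · intro p hp
    obtain ⟨g, hgU, hg1⟩ := exists_mem_cozIdeal (𝕜 := 𝕜) hU hp
    exact mem_lambdaSet_of_mem hgU (by rw [hg1]; exact one_ne_zero)

theorem lambdaSet_mono {H H' : Ideal (X →ᵇ 𝕜)} (h : H ≤ H') :
    lambdaSet H ⊆ lambdaSet H' := by
  intro p hp
  obtain ⟨g, hg, hpg⟩ := mem_iUnion₂.mp hp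
  exact mem_lambdaSet_of_mem (h hg) hpg

theorem cozIdeal_mono {U V : Set (StoneCech X)} (h : U ⊆ V) :
    (cozIdeal U : Ideal (X →ᵇ 𝕜)) ≤ cozIdeal V := fun f hf =>
  mem_cozIdeal.mpr fun p hp => h (mem_cozIdeal.mp hf p hp)

end MainAux


/-- For a Tychonoff space `X`, the poset `ℋ(X)` of non-vanishing closed ideals of `C_B(X)`
is order-isomorphic to the poset `𝒰(X)` of open subsets of `βX` containing `X`, via
`H ↦ λ_H X`. -/
theorem orderIso_ideals_opens (X : Type*) [TopologicalSpace X] [T35Space X]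
    (𝕜 : Type*) [RCLike 𝕜] :
    ∃ e : {H : Ideal (X →ᵇ 𝕜) //
            IsClosed (H : Set (X →ᵇ 𝕜)) ∧ ∀ x : X, ∃ f ∈ H, f x ≠ 0} ≃o
          {U : Set (StoneCech X) //
            IsOpen U ∧ range (stoneCechUnit : X → StoneCech X) ⊆ U},
      ∀ H, (e H).1 = lambdaSet H.1 := by
  have rangeSub : ∀ H : {H : Ideal (X →ᵇ 𝕜) //
      IsClosed (H : Set (X →ᵇ 𝕜)) ∧ ∀ x : X, ∃ f ∈ H, f x ≠ 0},
      range (stoneCechUnit : X → StoneCech X) ⊆ lambdaSet H.1 := by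
    rintro H _ ⟨x, rfl⟩
    obtain ⟨g, hg, hgx⟩ := H.2.2 x
    exact mem_lambdaSet_of_mem hg (by rw [betaExt_unit]; exact hgx)
  have nonvan : ∀ U : {U : Set (StoneCech X) //
      IsOpen U ∧ range (stoneCechUnit : X → StoneCech X) ⊆ U},
      ∀ x : X, ∃ f ∈ (cozIdeal U.1 : Ideal (X →ᵇ 𝕜)), f x ≠ 0 := by
    intro U x
    obtain ⟨g, hgU, hg1⟩ := exists_mem_cozIdeal (𝕜 := 𝕜) U.2.1 (U.2.2 ⟨x, rfl⟩)
    refine ⟨g, hgU, ?_⟩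
    rw [← betaExt_unit, hg1]
    exact one_ne_zero
  refine ⟨⟨⟨fun H => ⟨lambdaSet H.1, isOpen_lambdaSet H.1, rangeSub H⟩,
      fun U => ⟨cozIdeal U.1, isClosed_cozIdeal U.1, nonvan U⟩,
      fun H => Subtype.ext (cozIdeal_lambdaSet H.2.1),
      fun U => Subtype.ext (lambdaSet_cozIdeal U.2.1)⟩, ?_⟩, fun H => rfl⟩
  intro H H'
  constructor
  · intro hle
    have h1 : H.1 = cozIdeal (lambdaSet H.1) := (cozIdeal_lambdaSet H.2.1).symm
    have h2 : cozIdeal (lambdaSet H'.1) = H'.1 := cozIdeal_lambdaSet H'.2.1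
    show H.1 ≤ H'.1
    rw [h1, ← h2]
    exact cozIdeal_mono hle
  · intro hle
    exact lambdaSet_mono hle
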